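/- (Conjugacy with the Bernoulli shift) Let f : ℝ × ℝ → ℝ be continuous and 1-periodic in the time variable, and suppose the equation x' = f(t,x) admits a solution x with x(t+2) = x(t) for all t ∈ ℝ and x(t₁+1) ≠ x(t₁) for some t₁ ∈ ℝ. Then there exists a compact subset W of C(ℝ,ℝ) such that: every w ∈ W is a solution of x' = f(t,x); W is invariant under the time-one shift ψ₁ (ψ₁(W) = W) and ψ₁ restricted to W is a homeomorphism of W; and there exists a homeomorphism φ : Σ₂ → W satisfying φ ∘ σ = ψ₁ ∘ φ, where σ is the two-sided Bernoulli shift on Σ₂. -/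

import Mathlib

/-!
Because `x` is `2`-periodic, `g = x (· + 1) - x` satisfies `g (t - 1) = -g t`, so by the
intermediate value theorem it vanishes at some `t₀` with `t₀ < t₁ < t₀ + 1`; then `x (t₀ + m) = x t₀` for every
integer `m`. As `f` is `1`-periodic in time, every integer translate of `x` solves the equation, and
translates can be glued at the times `t₀ + k` without losing differentiability. Following
`x (· + k + η k)` on `[t₀ + k, t₀ + k + 1)` turns a symbol sequence `η` into a solution `w_η`, with
`w_η (· + 1) = w_{σ η}`; the symbol `η k` is read off from `w_η (t₁ + k) = x (t₁ + η k)` since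
`x (t₁ + 1) ≠ x t₁`, and on a bounded time interval `w_η` depends on finitely many symbols only. A
continuous injection of the compact space `Σ₂` into the Hausdorff space `C(ℝ, ℝ)` is a
homeomorphism onto its image.
-/

/-- `x` is a (classical) solution of the ODE `x' = f(t,x)` on the whole real line. -/
def IsSolution (f : ℝ × ℝ → ℝ) (x : ℝ → ℝ) : Prop :=
  ∀ t : ℝ, HasDerivAt x (f (t, x t)) t

/-- The time-one shift `ψ₁` on `C(ℝ, ℝ)`: `shiftOne w = w (· + 1)`. -/
def shiftOne (w : C(ℝ, ℝ)) : C(ℝ, ℝ) :=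
  w.comp ⟨fun t => t + 1, by continuity⟩

/-- The two-sided Bernoulli shift on `Σ₂ = {0,1}^ℤ`. -/
def bernoulliShift (s : ℤ → Fin 2) : ℤ → Fin 2 := fun i => s (i + 1)

open Set Filter Topology Function

noncomputable def glue (t₀ : ℝ) (y : ℤ → ℝ → ℝ) (t : ℝ) : ℝ :=
  y ⌊t - t₀⌋ t

section Glue

variable {t₀ t : ℝ} {y : ℤ → ℝ → ℝ}

lemma glue_eq_of_mem_Ico {k : ℤ} (h : t ∈ Ico (t₀ + k) (t₀ + k + 1)) : glue t₀ y t = y k t := by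
  rw [glue, Int.floor_eq_iff.mpr ⟨by linarith [h.1], by linarith [h.2]⟩]

lemma glue_eq_of_mem_Ioc (hy : ∀ k : ℤ, y k (t₀ + k + 1) = y (k + 1) (t₀ + k + 1)) {k : ℤ}
    (h : t ∈ Ioc (t₀ + k) (t₀ + k + 1)) : glue t₀ y t = y k t := by
  rcases h.2.lt_or_eq with hlt | rfl
  · exact glue_eq_of_mem_Ico ⟨h.1.le, hlt⟩
  · rw [hy, glue_eq_of_mem_Ico]
    push_cast
    constructor <;> linarith

theorem isSolution_glue {f : ℝ × ℝ → ℝ} (hy : ∀ k, IsSolution f (y k))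
    (hjunction : ∀ k : ℤ, y k (t₀ + k + 1) = y (k + 1) (t₀ + k + 1)) :
    IsSolution f (glue t₀ y) := by
  intro t
  set k := ⌊t - t₀⌋
  set j := ⌈t - t₀⌉ - 1
  have hk : t ∈ Ico (t₀ + k) (t₀ + k + 1) :=
    ⟨by linarith [Int.floor_le (t - t₀)], by linarith [Int.lt_floor_add_one (t - t₀)]⟩
  have hj : t ∈ Ioc (t₀ + j) (t₀ + j + 1) := by
    simp only [j, Int.cast_sub, Int.cast_one]
    exact ⟨by linarith [Int.ceil_lt_add_one (t - t₀)], by linarith [Int.le_ceil (t - t₀)]⟩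
  have right : HasDerivWithinAt (glue t₀ y) (f (t, glue t₀ y t)) (Ici t) t := by
    rw [glue_eq_of_mem_Ico hk]
    exact (hy k t).hasDerivWithinAt.congr_of_eventuallyEq
      (eventually_of_mem (Ico_mem_nhdsGE_of_mem hk) fun s hs => glue_eq_of_mem_Ico hs)
      (glue_eq_of_mem_Ico hk)
  have left : HasDerivWithinAt (glue t₀ y) (f (t, glue t₀ y t)) (Iic t) t := by
    rw [glue_eq_of_mem_Ioc hjunction hj]
    exact (hy j t).hasDerivWithinAt.congr_of_eventuallyEq
      (eventually_of_mem (Ioc_mem_nhdsLE_of_mem hj) fun s hs => glue_eq_of_mem_Ioc hjunction hs)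
      (glue_eq_of_mem_Ioc hjunction hj)
  exact hasDerivWithinAt_univ.mp (Iic_union_Ici (a := t) ▸ left.union right)

theorem continuous_uncurry_glue {X : Type*} [TopologicalSpace X] {y : X → ℤ → ℝ → ℝ}
    (hloc : ∀ k, IsLocallyConstant fun a => y a k) (hcont : ∀ a, Continuous (glue t₀ (y a))) :
    Continuous fun p : X × ℝ => glue t₀ (y p.1) p.2 := by
  refine continuous_iff_continuousAt.2 fun ⟨a, t⟩ => ?_
  set k := ⌊t - t₀⌋
  have ht : Ioo (t₀ + k - 1) (t₀ + k + 1) ∈ 𝓝 t :=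
    Ioo_mem_nhds (by linarith [Int.floor_le (t - t₀)]) (by linarith [Int.lt_floor_add_one (t - t₀)])
  have hnear : ∀ᶠ p : X × ℝ in 𝓝 (a, t), glue t₀ (y a) p.2 = glue t₀ (y p.1) p.2 := by
    filter_upwards [(((hloc (k - 1)).eventually_eq a).and ((hloc k).eventually_eq a)).prod_nhds ht]
      with ⟨b, s⟩ ⟨⟨hprev, hcur⟩, hs⟩
    rcases lt_or_ge s (t₀ + k) with hlt | hge
    · have hs' : s ∈ Ico (t₀ + (k - 1 : ℤ)) (t₀ + (k - 1 : ℤ) + 1) := by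
        push_cast
        constructor <;> linarith [hs.1]
      rw [glue_eq_of_mem_Ico hs', glue_eq_of_mem_Ico hs', hprev]
    · have hs' : s ∈ Ico (t₀ + k) (t₀ + k + 1) := ⟨hge, hs.2⟩
      rw [glue_eq_of_mem_Ico hs', glue_eq_of_mem_Ico hs', hcur]
  exact ((hcont a).comp continuous_snd).continuousAt.congr hnear

end Glue

theorem IsSolution.continuous {f : ℝ × ℝ → ℝ} {x : ℝ → ℝ} (hx : IsSolution f x) : Continuous x :=
  continuous_iff_continuousAt.2 fun t => (hx t).continuousAt

theorem IsSolution.comp_add_int {f : ℝ × ℝ → ℝ} (hper : ∀ t x : ℝ, f (t + 1, x) = f (t, x))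
    {x : ℝ → ℝ} (hx : IsSolution f x) (n : ℤ) : IsSolution f fun t => x (t + n) := by
  intro t
  have hfn : f (t + n, x (t + n)) = f (t, x (t + n)) := by
    simpa using (show Periodic (fun s => f (s, x (t + n))) 1 from fun s => hper s _).int_mul n t
  simpa [hfn] using (hx (t + n)).comp_add_const t n

section Periodic

variable {x : ℝ → ℝ}

theorem Function.Periodic.exists_mem_Ioo_eq_add_one (hp : Periodic x 2) (hc : Continuous x) {t₁ : ℝ}
    (ht₁ : x (t₁ + 1) ≠ x t₁) : ∃ t₀, t₁ ∈ Ioo t₀ (t₀ + 1) ∧ x (t₀ + 1) = x t₀ := by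
  set g : ℝ → ℝ := fun s => x (s + 1) - x s
  have hanti : g (t₁ - 1) = -g t₁ := by
    simp only [g, sub_add_cancel, ← hp (t₁ - 1), show t₁ - 1 + 2 = t₁ + 1 by ring]
    ring
  have hg : g t₁ ≠ 0 := sub_ne_zero.mpr ht₁
  have hzero : (0 : ℝ) ∈ uIcc (g (t₁ - 1)) (g t₁) := by
    rw [hanti, mem_uIcc]
    rcases le_total 0 (g t₁) with h | h
    · exact Or.inl ⟨by linarith, h⟩
    · exact Or.inr ⟨h, by linarith⟩
  obtain ⟨t₀, ht₀, hgt₀⟩ :=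
    intermediate_value_uIcc (by fun_prop : Continuous g).continuousOn hzero
  rw [uIcc_of_le (by linarith)] at ht₀
  have hlt : t₀ < t₁ := ht₀.2.lt_of_ne (by rintro rfl; exact hg hgt₀)
  have hgt : t₁ - 1 < t₀ := ht₀.1.lt_of_ne (by rintro rfl; exact hg (by linarith))
  exact ⟨t₀, ⟨hlt, by linarith⟩, sub_eq_zero.mp hgt₀⟩

theorem Function.Periodic.add_int_eq_of_add_one_eq (hp : Periodic x 2) {t₀ : ℝ}
    (h : x (t₀ + 1) = x t₀) (m : ℤ) : x (t₀ + m) = x t₀ := by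
  obtain ⟨q, rfl | rfl⟩ := m.even_or_odd'
  · convert hp.int_mul q t₀ using 2
    push_cast
    ring
  · rw [← h]
    convert hp.int_mul q (t₀ + 1) using 2
    push_cast
    ring

end Periodic

/-- On `[t₀ + k, t₀ + k + 1)` this follows `x (· + k + η k)`: the extra `k` makes the time-one shift
act as the Bernoulli shift when `x` is `2`-periodic. -/
noncomputable def codedSolution (x : ℝ → ℝ) (t₀ : ℝ) (η : ℤ → Fin 2) : ℝ → ℝ :=
  glue t₀ fun k s => x (s + k + (η k : ℕ))

section CodedSolution

variable {x : ℝ → ℝ} {t₀ : ℝ}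

theorem isSolution_codedSolution {f : ℝ × ℝ → ℝ} (hper : ∀ t x : ℝ, f (t + 1, x) = f (t, x))
    (hx : IsSolution f x) (hp : Periodic x 2) (h : x (t₀ + 1) = x t₀) (η : ℤ → Fin 2) :
    IsSolution f (codedSolution x t₀ η) := by
  refine isSolution_glue (fun k => ?_) fun k => ?_
  · simpa [add_assoc] using hx.comp_add_int hper (k + (η k : ℕ))
  · have hconst := hp.add_int_eq_of_add_one_eq h
    rw [show t₀ + k + 1 + k + (η k : ℕ) = t₀ + ((2 * k + 1 + (η k : ℕ) : ℤ) : ℝ) by push_cast; ring,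
      show t₀ + k + 1 + ((k + 1 : ℤ) : ℝ) + (η (k + 1) : ℕ)
        = t₀ + ((2 * k + 2 + (η (k + 1) : ℕ) : ℤ) : ℝ) by push_cast; ring,
      hconst, hconst]

theorem codedSolution_add_one (hp : Periodic x 2) (η : ℤ → Fin 2) (t : ℝ) :
    codedSolution x t₀ η (t + 1) = codedSolution x t₀ (bernoulliShift η) t := by
  have hfloor : ⌊t + 1 - t₀⌋ = ⌊t - t₀⌋ + 1 := by rw [add_sub_right_comm, Int.floor_add_one]
  simp only [codedSolution, glue, hfloor, bernoulliShift]
  convert hp (t + ⌊t - t₀⌋ + (η (⌊t - t₀⌋ + 1) : ℕ)) using 2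
  push_cast
  ring

theorem codedSolution_injective (hp : Periodic x 2) {t₁ : ℝ} (ht₁ : t₁ ∈ Ioo t₀ (t₀ + 1))
    (hne : x (t₁ + 1) ≠ x t₁) : Injective (codedSolution x t₀) := by
  have hread : ∀ η (k : ℤ), codedSolution x t₀ η (t₁ + k) = x (t₁ + (η k : ℕ)) := fun η k => by
    rw [codedSolution, glue_eq_of_mem_Ico ⟨by linarith [ht₁.1], by linarith [ht₁.2]⟩]
    convert hp.int_mul k (t₁ + (η k : ℕ)) using 2
    ring
  have hsymbol : ∀ e e' : Fin 2, x (t₁ + (e : ℕ)) = x (t₁ + (e' : ℕ)) → e = e' := by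
    intro e e'
    fin_cases e <;> fin_cases e' <;> simp [hne, Ne.symm hne]
  intro η η' h
  funext k
  exact hsymbol _ _ (by rw [← hread, ← hread, h])

theorem continuous_uncurry_codedSolution {f : ℝ × ℝ → ℝ}
    (hper : ∀ t x : ℝ, f (t + 1, x) = f (t, x)) (hx : IsSolution f x) (hp : Periodic x 2)
    (h : x (t₀ + 1) = x t₀) :
    Continuous fun p : (ℤ → Fin 2) × ℝ => codedSolution x t₀ p.1 p.2 :=
  continuous_uncurry_glue
    (fun k => IsLocallyConstant.comp_continuous
      (IsLocallyConstant.of_discrete fun e : Fin 2 => fun s => x (s + k + (e : ℕ)))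
      (continuous_apply k))
    fun η => (isSolution_codedSolution hper hx hp h η).continuous

end CodedSolution

def bernoulliShiftHomeomorph : (ℤ → Fin 2) ≃ₜ (ℤ → Fin 2) where
  toFun := bernoulliShift
  invFun s i := s (i - 1)
  left_inv s := funext fun i => by simp [bernoulliShift]
  right_inv s := funext fun i => by simp [bernoulliShift]
  continuous_toFun := continuous_pi fun i => continuous_apply _
  continuous_invFun := continuous_pi fun i => continuous_apply _

namespace Function.Semiconj

variable {X Y : Type*} {Φ : X → Y} {S : Y → Y}

theorem image_range {σ : X → X} (h : Semiconj Φ σ S) (hσ : Surjective σ) : S '' range Φ = range Φ := by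
  rw [← range_comp, ← h.comp_eq, hσ.range_comp]

theorem exists_homeomorph_range [TopologicalSpace X] [CompactSpace X] [TopologicalSpace Y]
    [T2Space Y] {σ : X ≃ₜ X} (h : Semiconj Φ σ S) (hc : Continuous Φ) (hinj : Injective Φ) :
    ∃ φ : X ≃ₜ range Φ, (∀ a, (φ a : Y) = Φ a) ∧
      ∃ ψ : range Φ ≃ₜ range Φ, ∀ w, (ψ w : Y) = S w := by
  set φ := (hc.isClosedEmbedding hinj).isEmbedding.toHomeomorph
  have hφ : ∀ a, (φ a : Y) = Φ a := fun a => rfl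
  refine ⟨φ, hφ, φ.symm.trans (σ.trans φ), fun w => ?_⟩
  rw [Homeomorph.trans_apply, Homeomorph.trans_apply, hφ, h, ← hφ, φ.apply_symm_apply]

end Function.Semiconj

theorem conjugacy_with_bernoulli_shift_general
    (f : ℝ × ℝ → ℝ)
    (hper : ∀ t x : ℝ, f (t + 1, x) = f (t, x))
    (x : ℝ → ℝ) (hx : IsSolution f x)
    (hx2 : ∀ t : ℝ, x (t + 2) = x t)
    (t₁ : ℝ) (ht₁ : x (t₁ + 1) ≠ x t₁) :
    ∃ W : Set C(ℝ, ℝ), IsCompact W ∧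
      (∀ w ∈ W, IsSolution f w) ∧
      shiftOne '' W = W ∧
      (∃ ψ : W ≃ₜ W, ∀ w : W, (ψ w : C(ℝ, ℝ)) = shiftOne (w : C(ℝ, ℝ))) ∧
      (∃ φ : (ℤ → Fin 2) ≃ₜ W, ∀ η : ℤ → Fin 2,
        (φ (bernoulliShift η) : C(ℝ, ℝ)) = shiftOne ((φ η : C(ℝ, ℝ)))) := by
  obtain ⟨t₀, ht₁₀, hjunction⟩ := Periodic.exists_mem_Ioo_eq_add_one hx2 hx.continuous ht₁
  let Φ : C(ℤ → Fin 2, C(ℝ, ℝ)) :=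
    ContinuousMap.curry ⟨_, continuous_uncurry_codedSolution hper hx hx2 hjunction⟩
  have hinj : Injective Φ := fun η η' h =>
    codedSolution_injective hx2 ht₁₀ ht₁ (funext fun t => DFunLike.congr_fun h t)
  have hconj : Semiconj Φ bernoulliShiftHomeomorph shiftOne := fun η =>
    ContinuousMap.ext fun t => (codedSolution_add_one hx2 η t).symm
  obtain ⟨φ, hφ, ψ, hψ⟩ := hconj.exists_homeomorph_range Φ.continuous hinj
  refine ⟨range Φ, isCompact_range Φ.continuous, ?_,
    hconj.image_range bernoulliShiftHomeomorph.surjective, ⟨ψ, hψ⟩, φ, fun η => ?_⟩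
  · rintro _ ⟨η, rfl⟩
    exact isSolution_codedSolution hper hx hx2 hjunction η
  · rw [hφ, hφ]
    exact hconj η

theorem conjugacy_with_bernoulli_shift
    (f : ℝ × ℝ → ℝ) (hf : Continuous f)
    (hper : ∀ t x : ℝ, f (t + 1, x) = f (t, x))
    (x : ℝ → ℝ) (hx : IsSolution f x)
    (hx2 : ∀ t : ℝ, x (t + 2) = x t)
    (t₁ : ℝ) (ht₁ : x (t₁ + 1) ≠ x t₁) :
    ∃ W : Set C(ℝ, ℝ), IsCompact W ∧
      (∀ w ∈ W, IsSolution f w) ∧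
      shiftOne '' W = W ∧
      (∃ ψ : W ≃ₜ W, ∀ w : W, (ψ w : C(ℝ, ℝ)) = shiftOne (w : C(ℝ, ℝ))) ∧
      (∃ φ : (ℤ → Fin 2) ≃ₜ W, ∀ η : ℤ → Fin 2,
        (φ (bernoulliShift η) : C(ℝ, ℝ)) = shiftOne ((φ η : C(ℝ, ℝ)))) :=
  conjugacy_with_bernoulli_shift_general f hper x hx hx2 t₁ ht₁
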